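/- Let N ≥ 2 and let A_j, B_j, C_j ∈ ℂ for j = 1,…,N−1. Suppose x_0, x_1, …, x_N ∈ ℂ satisfy x_0 = 1 and C_j x_{j−1} + B_j x_j + A_j x_{j+1} = 0 for all j = 1,…,N−1. Then (∏_{j=1}^{N−1} A_j) · x_N = Σ_{t ∈ 𝒜_N} s_0(t) · ∏_{j=1}^{N−1} v_j(t), where s_0(t) = 1 if t_1 = c and s_0(t) = x_1 if t_1 ∈ {a,b}; equivalently, (∏_{j=1}^{N−1} A_j) · x_N = D¹_N · x_1 + D²_N. -/

import Mathlib

/-- Labels `a`, `b`, `c` for the sequences in the collection `𝒜_N`. -/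
inductive Label where
  | a : Label
  | b : Label
  | c : Label
deriving DecidableEq

instance : Fintype Label :=
  ⟨{Label.a, Label.b, Label.c}, fun x => by cases x <;> simp⟩

/-- A sequence `t = (t_1, …, t_n)` (indexed here by `Fin n`, index `i` standing for
`j = i + 1`) is admissible iff `t_{N-1} ∈ {b, c}` (i.e. the last label is not `a`)
and, for `2 ≤ j ≤ N-1`: if `t_j = c` then `t_{j-1} = a`, while if `t_j ∈ {a, b}`
then `t_{j-1} ∈ {b, c}`.  Here `n = N - 1`. -/
def Admissible {n : ℕ} (t : Fin n → Label) : Prop :=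
  (∀ h : 0 < n, t ⟨n - 1, by omega⟩ ≠ Label.a) ∧
  ∀ j : ℕ, ∀ h : j + 1 < n,
    (t ⟨j + 1, h⟩ = Label.c → t ⟨j, by omega⟩ = Label.a) ∧
    (t ⟨j + 1, h⟩ ≠ Label.c → t ⟨j, by omega⟩ ≠ Label.a)

/-- The collection `𝒜_N` (with `n = N - 1` labels per sequence). -/
noncomputable def AdmSet (n : ℕ) : Finset (Fin n → Label) :=
  haveI := Classical.decPred (Admissible (n := n))
  Finset.univ.filter Admissible

/-- The value `v_j(t)` of the `j`-th label of `t`: `A_j` if `t_j = a`, `-B_j` if `t_j = b`,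
`-C_j` if `t_j = c`.  The functions `A B C : ℕ → ℂ` are read at the 1-based index `j = i+1`. -/
def labelVal {n : ℕ} (A B C : ℕ → ℂ) (t : Fin n → Label) (j : Fin n) : ℂ :=
  match t j with
  | Label.a => A (j.val + 1)
  | Label.b => -B (j.val + 1)
  | Label.c => -C (j.val + 1)

/-- `D¹_N = Σ_{t ∈ 𝒜_N, t_1 ≠ c} ∏_{j=1}^{N-1} v_j(t)`, with `n = N - 1`. -/
noncomputable def D1 (n : ℕ) (A B C : ℕ → ℂ) : ℂ :=
  haveI : DecidablePred fun t : Fin n → Label => ∀ h : 0 < n, t ⟨0, h⟩ ≠ Label.c :=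
    Classical.decPred _
  ∑ t ∈ (AdmSet n).filter (fun t => ∀ h : 0 < n, t ⟨0, h⟩ ≠ Label.c),
    ∏ j, labelVal A B C t j

/-- `D²_N = Σ_{t ∈ 𝒜_N, t_1 = c} ∏_{j=1}^{N-1} v_j(t)`, with `n = N - 1`. -/
noncomputable def D2 (n : ℕ) (A B C : ℕ → ℂ) : ℂ :=
  haveI : DecidablePred fun t : Fin n → Label => ∀ h : 0 < n, t ⟨0, h⟩ = Label.c :=
    Classical.decPred _
  ∑ t ∈ (AdmSet n).filter (fun t => ∀ h : 0 < n, t ⟨0, h⟩ = Label.c),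
    ∏ j, labelVal A B C t j

/-!
Let `S_n` be the sum of `s₀(t) ∏ v_j(t)` over admissible sequences of length `n`. Splitting off
the last label, an admissible sequence of length `n + 2` either ends in `b` after an arbitrary
admissible sequence of length `n + 1`, or ends in `a c` after an admissible sequence of length `n`
(a final `a` is never admissible). Hence
`S_{n+2} = -B_{n+2} S_{n+1} - C_{n+2} A_{n+1} S_n`, with `S_0 = x_1` and `S_1 = -B_1 x_1 - C_1`.
The recurrence for `x` shows that `(A_1 ⋯ A_n) x_{n+1}` obeys the same recursion with the same
initial values.
-/

open Finset

theorem Fin.sum_univ_snoc_pi {α M : Type*} [Fintype α] [AddCommMonoid M] {n : ℕ}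
    (F : (Fin (n + 1) → α) → M) :
    ∑ t, F t = ∑ t : Fin n → α, ∑ l, F (Fin.snoc t l) := by
  rw [← (Fin.snocEquiv fun _ => α).sum_comp, Fintype.sum_prod_type_right]
  rfl

theorem Label.sum_univ {M : Type*} [AddCommMonoid M] (g : Label → M) :
    ∑ l, g l = g .a + g .b + g .c := by
  rw [show (univ : Finset Label) = {.a, .b, .c} from rfl, sum_insert (by decide),
    sum_pair (by decide), add_assoc]

theorem Fin.snoc_mk {α : Type*} {n : ℕ} (t : Fin n → α) (l : α) (i : ℕ) (hi : i < n + 1) :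
    (Fin.snoc t l : Fin (n + 1) → α) ⟨i, hi⟩ = if h : i < n then t ⟨i, h⟩ else l := by
  simp [Fin.snoc]

section Admissibility

variable {n : ℕ}

def ChainAdmissible (t : Fin n → Label) : Prop :=
  ∀ j : ℕ, ∀ h : j + 1 < n,
    (t ⟨j + 1, h⟩ = Label.c → t ⟨j, by omega⟩ = Label.a) ∧
    (t ⟨j + 1, h⟩ ≠ Label.c → t ⟨j, by omega⟩ ≠ Label.a)

theorem admissible_iff (t : Fin n → Label) :
    Admissible t ↔ (∀ h : 0 < n, t ⟨n - 1, by omega⟩ ≠ Label.a) ∧ ChainAdmissible t :=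
  Iff.rfl

theorem chainAdmissible_snoc (t : Fin n → Label) (l : Label) :
    ChainAdmissible (Fin.snoc t l : Fin (n + 1) → Label) ↔
      ChainAdmissible t ∧ ∀ h : 0 < n, (t ⟨n - 1, by omega⟩ = Label.a ↔ l = Label.c) := by
  constructor
  · intro H
    refine ⟨fun j h => ?_, fun h => ?_⟩
    · simpa [Fin.snoc_mk, h, show j < n by omega] using H j (by omega)
    · have := H (n - 1) (by omega)
      simp only [Fin.snoc_mk, show n - 1 < n by omega, show ¬n - 1 + 1 < n by omega,
        dite_true, dite_false] at this
      tauto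
  · rintro ⟨H, Hlast⟩ j h
    by_cases h' : j + 1 < n
    · simpa [Fin.snoc_mk, h', show j < n by omega] using H j h'
    · obtain rfl : j = n - 1 := by omega
      simp only [Fin.snoc_mk, h', show n - 1 < n by omega, dite_true, dite_false]
      have := Hlast (by omega)
      tauto

theorem admissible_snoc (t : Fin n → Label) (l : Label) :
    Admissible (Fin.snoc t l : Fin (n + 1) → Label) ↔
      l ≠ Label.a ∧ ChainAdmissible (Fin.snoc t l : Fin (n + 1) → Label) := by
  simp [admissible_iff, Fin.snoc_mk]

theorem not_admissible_snoc_a (t : Fin n → Label) :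
    ¬Admissible (Fin.snoc t Label.a : Fin (n + 1) → Label) := by
  simp [admissible_snoc]

theorem admissible_snoc_b_iff (t : Fin n → Label) :
    Admissible (Fin.snoc t Label.b : Fin (n + 1) → Label) ↔ Admissible t := by
  rw [admissible_snoc, chainAdmissible_snoc, admissible_iff]
  simp [and_comm]

theorem admissible_snoc_c_iff (t : Fin n → Label) :
    Admissible (Fin.snoc t Label.c : Fin (n + 1) → Label) ↔
      ChainAdmissible t ∧ ∀ h : 0 < n, t ⟨n - 1, by omega⟩ = Label.a := by
  simp [admissible_snoc, chainAdmissible_snoc]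

theorem admissible_snoc_snoc_c_iff (u : Fin n → Label) (m : Label) :
    Admissible (Fin.snoc (Fin.snoc u m : Fin (n + 1) → Label) Label.c : Fin (n + 2) → Label) ↔
      m = Label.a ∧ Admissible u := by
  rw [admissible_snoc_c_iff, chainAdmissible_snoc, admissible_iff]
  simp only [Fin.snoc_mk, Nat.add_sub_cancel, lt_irrefl, dite_false, Nat.zero_lt_succ, forall_const]
  constructor
  · rintro ⟨⟨hu, hlast⟩, rfl⟩
    exact ⟨rfl, fun h => by simpa using hlast h, hu⟩
  · rintro ⟨rfl, hlast, hu⟩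
    exact ⟨⟨hu, fun h => by simpa using hlast h⟩, rfl⟩

end Admissibility

def labelWeight (A B C : ℕ → ℂ) : Label → ℕ → ℂ
  | .a, k => A k
  | .b, k => -B k
  | .c, k => -C k

theorem labelVal_eq_labelWeight {n : ℕ} (A B C : ℕ → ℂ) (t : Fin n → Label) (j : Fin n) :
    labelVal A B C t j = labelWeight A B C (t j) (j + 1) := by
  unfold labelVal labelWeight
  cases t j <;> rfl

theorem prod_labelVal_snoc {n : ℕ} (A B C : ℕ → ℂ) (t : Fin n → Label) (l : Label) :
    ∏ j, labelVal A B C (Fin.snoc t l : Fin (n + 1) → Label) j =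
      (∏ j, labelVal A B C t j) * labelWeight A B C l (n + 1) := by
  simp [Fin.prod_univ_castSucc, labelVal_eq_labelWeight]

section WeightedSum

variable (x₁ : ℂ) (A B C : ℕ → ℂ) {n : ℕ}

-- `s₀(t)`; the empty sequence gets `x₁` so that the recursion holds from `S_0` on.
def initialWeight (t : Fin n → Label) : ℂ :=
  if h : 0 < n then (if t ⟨0, h⟩ = Label.c then 1 else x₁) else x₁

theorem initialWeight_of_pos (hn : 0 < n) (t : Fin n → Label) :
    initialWeight x₁ t = if t ⟨0, hn⟩ = Label.c then 1 else x₁ :=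
  dif_pos hn

theorem initialWeight_snoc_of_pos (hn : 0 < n) (t : Fin n → Label) (l : Label) :
    initialWeight x₁ (Fin.snoc t l : Fin (n + 1) → Label) = initialWeight x₁ t := by
  simp only [initialWeight, hn, Nat.zero_lt_succ, dite_true, Fin.snoc_mk]

theorem initialWeight_snoc_of_ne_c (t : Fin n → Label) {l : Label} (hl : l ≠ Label.c) :
    initialWeight x₁ (Fin.snoc t l : Fin (n + 1) → Label) = initialWeight x₁ t := by
  rcases Nat.eq_zero_or_pos n with rfl | hn
  · simp only [initialWeight, Fin.snoc_mk, lt_irrefl, Nat.zero_lt_succ, dite_true, dite_false,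
      hl, if_false]
  · exact initialWeight_snoc_of_pos x₁ hn t l

open Classical in
noncomputable def weightedTerm (t : Fin n → Label) : ℂ :=
  if Admissible t then initialWeight x₁ t * ∏ j, labelVal A B C t j else 0

noncomputable def weightedSum (n : ℕ) : ℂ :=
  ∑ t ∈ AdmSet n, initialWeight x₁ t * ∏ j, labelVal A B C t j

theorem weightedSum_eq_sum_weightedTerm (n : ℕ) :
    weightedSum x₁ A B C n = ∑ t : Fin n → Label, weightedTerm x₁ A B C t := by
  classical
  rw [weightedSum, AdmSet, sum_filter]
  rfl

theorem weightedTerm_snoc_a (t : Fin n → Label) :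
    weightedTerm x₁ A B C (Fin.snoc t Label.a : Fin (n + 1) → Label) = 0 :=
  if_neg (not_admissible_snoc_a t)

theorem weightedTerm_snoc_b (t : Fin n → Label) :
    weightedTerm x₁ A B C (Fin.snoc t Label.b : Fin (n + 1) → Label) =
      weightedTerm x₁ A B C t * -B (n + 1) := by
  by_cases ht : Admissible t
  · simp only [weightedTerm, if_pos ht, if_pos ((admissible_snoc_b_iff t).2 ht),
      prod_labelVal_snoc, initialWeight_snoc_of_ne_c x₁ t (show Label.b ≠ Label.c by decide),
      labelWeight]
    ring
  · simp [weightedTerm, ht, admissible_snoc_b_iff]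

theorem weightedTerm_snoc_snoc_c (u : Fin n → Label) (m : Label) :
    weightedTerm x₁ A B C (Fin.snoc (Fin.snoc u m : Fin (n + 1) → Label) Label.c) =
      if m = Label.a then weightedTerm x₁ A B C u * (A (n + 1) * -C (n + 2)) else 0 := by
  rcases eq_or_ne m Label.a with rfl | hm
  · by_cases hu : Admissible u
    · simp only [weightedTerm, if_pos hu, if_pos ((admissible_snoc_snoc_c_iff u _).2 ⟨rfl, hu⟩),
        if_true, prod_labelVal_snoc, initialWeight_snoc_of_pos x₁ (Nat.zero_lt_succ n),
        initialWeight_snoc_of_ne_c x₁ u (show Label.a ≠ Label.c by decide), labelWeight]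
      ring
    · simp [weightedTerm, hu, admissible_snoc_snoc_c_iff]
  · simp [weightedTerm, admissible_snoc_snoc_c_iff, hm]

theorem weightedTerm_fin_zero (t : Fin 0 → Label) : weightedTerm x₁ A B C t = x₁ := by
  have : Admissible t := ⟨nofun, nofun⟩
  simp [weightedTerm, this, initialWeight]

theorem weightedSum_zero : weightedSum x₁ A B C 0 = x₁ := by
  simp [weightedSum_eq_sum_weightedTerm, weightedTerm_fin_zero]

theorem weightedSum_one : weightedSum x₁ A B C 1 = -B 1 * x₁ - C 1 := by
  have hc : Admissible (Fin.snoc (default : Fin 0 → Label) Label.c : Fin 1 → Label) :=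
    (admissible_snoc_c_iff _).2 ⟨nofun, nofun⟩
  rw [weightedSum_eq_sum_weightedTerm, Fin.sum_univ_snoc_pi, Fintype.sum_unique, Label.sum_univ,
    weightedTerm_snoc_a, weightedTerm_snoc_b, weightedTerm_fin_zero, weightedTerm, if_pos hc,
    prod_labelVal_snoc]
  simp [initialWeight, Fin.snoc, labelWeight, sub_eq_add_neg, mul_comm]

theorem weightedSum_add_two (n : ℕ) :
    weightedSum x₁ A B C (n + 2) =
      -B (n + 2) * weightedSum x₁ A B C (n + 1) -
        C (n + 2) * A (n + 1) * weightedSum x₁ A B C n := by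
  have sum_b : ∑ t : Fin (n + 1) → Label, weightedTerm x₁ A B C (Fin.snoc t Label.b) =
      -B (n + 2) * weightedSum x₁ A B C (n + 1) := by
    simp only [weightedTerm_snoc_b, weightedSum_eq_sum_weightedTerm, mul_sum, mul_comm]
  have sum_c : ∑ t : Fin (n + 1) → Label, weightedTerm x₁ A B C (Fin.snoc t Label.c) =
      -C (n + 2) * A (n + 1) * weightedSum x₁ A B C n := by
    rw [Fin.sum_univ_snoc_pi fun t => weightedTerm x₁ A B C (Fin.snoc t Label.c),
      weightedSum_eq_sum_weightedTerm, mul_sum]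
    refine sum_congr rfl fun u _ => ?_
    simp only [Label.sum_univ, weightedTerm_snoc_snoc_c, reduceCtorEq, if_true, if_false]
    ring
  rw [weightedSum_eq_sum_weightedTerm, Fin.sum_univ_snoc_pi]
  simp only [Label.sum_univ, weightedTerm_snoc_a, zero_add, sum_add_distrib, sum_b, sum_c]
  ring

end WeightedSum

theorem weightedSum_eq_D1_mul_add_D2 (x₁ : ℂ) (A B C : ℕ → ℂ) {n : ℕ} (hn : 0 < n) :
    weightedSum x₁ A B C n = D1 n A B C * x₁ + D2 n A B C := by
  classical
  simp only [weightedSum, D1, D2, sum_filter, sum_mul, ← sum_add_distrib]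
  refine sum_congr rfl fun t _ => ?_
  by_cases h : t ⟨0, hn⟩ = Label.c <;> simp [initialWeight_of_pos x₁ hn, h, hn.ne', mul_comm]

theorem eq_of_twoStep_recurrence {R : Type*} (F : ℕ → R → R → R) {f g : ℕ → R} {M : ℕ}
    (hf : ∀ n, n + 2 ≤ M → f (n + 2) = F n (f (n + 1)) (f n))
    (hg : ∀ n, n + 2 ≤ M → g (n + 2) = F n (g (n + 1)) (g n))
    (h₀ : f 0 = g 0) (h₁ : f 1 = g 1) : ∀ n ≤ M, f n = g n := by
  intro n
  induction n using Nat.strong_induction_on with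
  | _ n ih =>
    match n with
    | 0 => exact fun _ => h₀
    | 1 => exact fun _ => h₁
    | n + 2 =>
      intro hn
      rw [hf n hn, hg n hn, ih (n + 1) (by omega) (by omega), ih n (by omega) (by omega)]

theorem weightedSum_eq_prod_mul (A B C x : ℕ → ℂ) {M : ℕ} (hM : 1 ≤ M) (hx0 : x 0 = 1)
    (hrec : ∀ j, 1 ≤ j → j ≤ M → C j * x (j - 1) + B j * x j + A j * x (j + 1) = 0) :
    ∀ n ≤ M, weightedSum (x 1) A B C n = (∏ j ∈ Icc 1 n, A j) * x (n + 1) := by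
  refine eq_of_twoStep_recurrence (fun n u v => -B (n + 2) * u - C (n + 2) * A (n + 1) * v)
    (fun n _ => weightedSum_add_two _ _ _ _ n) ?_ (by simp [weightedSum_zero]) ?_
  · intro n hn
    have h := hrec (n + 2) (by omega) hn
    rw [show n + 2 - 1 = n + 1 from rfl] at h
    rw [prod_Icc_succ_top (by omega : 1 ≤ n + 2), prod_Icc_succ_top (by omega : 1 ≤ n + 1)]
    linear_combination (∏ j ∈ Icc 1 n, A j) * A (n + 1) * h
  · have h := hrec 1 le_rfl hM
    simp only [Nat.sub_self, hx0] at h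
    rw [weightedSum_one, Icc_self, prod_singleton]
    linear_combination -h

/-- If `x_0 = 1` and `C_j x_{j-1} + B_j x_j + A_j x_{j+1} = 0` for `j = 1, …, N-1`, then
`(∏_{j=1}^{N-1} A_j) x_N = Σ_{t ∈ 𝒜_N} s_0(t) ∏_j v_j(t)`, where `s_0(t) = 1` if `t_1 = c`
and `s_0(t) = x_1` otherwise; equivalently, `(∏_{j=1}^{N-1} A_j) x_N = D¹_N x_1 + D²_N`. -/
theorem stmt0 (N : ℕ) (hN : 2 ≤ N) (A B C : ℕ → ℂ) (x : ℕ → ℂ)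
    (hx0 : x 0 = 1)
    (hrec : ∀ j, 1 ≤ j → j ≤ N - 1 →
      C j * x (j - 1) + B j * x j + A j * x (j + 1) = 0) :
    ((∏ j ∈ Finset.Icc 1 (N - 1), A j) * x N =
      ∑ t ∈ AdmSet (N - 1),
        (if t ⟨0, by omega⟩ = Label.c then (1 : ℂ) else x 1) *
          ∏ j, labelVal A B C t j) ∧
    (∏ j ∈ Finset.Icc 1 (N - 1), A j) * x N =
      D1 (N - 1) A B C * x 1 + D2 (N - 1) A B C := by
  have hN' : 0 < N - 1 := by omega
  have key := weightedSum_eq_prod_mul A B C x hN' hx0 hrec (N - 1) le_rfl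
  rw [Nat.sub_add_cancel (by omega)] at key
  refine ⟨?_, key ▸ weightedSum_eq_D1_mul_add_D2 _ _ _ _ hN'⟩
  rw [← key, weightedSum]
  exact sum_congr rfl fun t _ => by rw [initialWeight_of_pos _ hN']
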